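/- There exists a universal constant C > 0 such that for every integer N ≥ 2, all pairwise distinct points X_1, …, X_N ∈ ℝ³, and all indices 1 ≤ j, k ≤ N one has Σ_{i=1}^N 1/(d_{ij}² d_{ik}³) ≤ C S_3 / d_{jk}². -/
import Mathlib


open scoped BigOperators

/-- The minimal distance between pairwise distinct points `X 1, …, X N`. -/
noncomputable def dmin {N : ℕ} (X : Fin N → EuclideanSpace ℝ (Fin 3)) : ℝ :=
  sInf {r : ℝ | ∃ i j : Fin N, i ≠ j ∧ r = dist (X i) (X j)}

/-- The distance `d_{ij} = |X_i - X_j|` for `i ≠ j`, with the convention `d_{ii} = d_min`. -/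
noncomputable def dd {N : ℕ} (X : Fin N → EuclideanSpace ℝ (Fin 3)) (i j : Fin N) : ℝ :=
  if i = j then dmin X else dist (X i) (X j)

/-- `S_β = max_i ∑_j d_{ij}^{-β}`. -/
noncomputable def Ssum {N : ℕ} (X : Fin N → EuclideanSpace ℝ (Fin 3)) (β : ℝ) : ℝ :=
  ⨆ i : Fin N, ∑ j : Fin N, (dd X i j) ^ (-β)

section Aux

variable {N : ℕ} (X : Fin N → EuclideanSpace ℝ (Fin 3))

lemma distSet_fin :
    ({r : ℝ | ∃ i j : Fin N, i ≠ j ∧ r = dist (X i) (X j)}).Finite := by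
  apply Set.Finite.subset (Set.finite_range (fun p : Fin N × Fin N => dist (X p.1) (X p.2)))
  rintro r ⟨i, j, -, rfl⟩
  exact ⟨(i, j), rfl⟩

lemma distSet_ne (hN : 2 ≤ N) :
    ({r : ℝ | ∃ i j : Fin N, i ≠ j ∧ r = dist (X i) (X j)}).Nonempty := by
  refine ⟨dist (X ⟨0, by omega⟩) (X ⟨1, by omega⟩), ⟨0, by omega⟩, ⟨1, by omega⟩, ?_, rfl⟩
  simp [Fin.ext_iff]

lemma dmin_pos (hN : 2 ≤ N) (hX : Function.Injective X) : 0 < dmin X := by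
  have hm := (distSet_ne X hN).csInf_mem (distSet_fin X)
  obtain ⟨i, j, hij, h⟩ := hm
  rw [dmin, h]
  exact dist_pos.2 fun he => hij (hX he)

lemma dmin_le {i j : Fin N} (hij : i ≠ j) : dmin X ≤ dist (X i) (X j) :=
  csInf_le (distSet_fin X).bddBelow ⟨i, j, hij, rfl⟩

lemma dd_pos (hN : 2 ≤ N) (hX : Function.Injective X) (i j : Fin N) : 0 < dd X i j := by
  rw [dd]
  split_ifs with h
  · exact dmin_pos X hN hX
  · exact dist_pos.2 fun he => h (hX he)

lemma dd_symm (i j : Fin N) : dd X i j = dd X j i := by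
  rw [dd, dd]
  rcases eq_or_ne i j with h | h
  · simp [h]
  · rw [if_neg h, if_neg (Ne.symm h), dist_comm]

lemma dmin_le_dd (i j : Fin N) : dmin X ≤ dd X i j := by
  rw [dd]
  split_ifs with h
  · exact le_rfl
  · exact dmin_le X h

lemma dd_tri (hN : 2 ≤ N) (hX : Function.Injective X) (i j k : Fin N) :
    dd X j k ≤ 2 * max (dd X i j) (dd X i k) := by
  have hp1 := dd_pos X hN hX i j
  have hp2 := dd_pos X hN hX i k
  have hm1 : dd X i j ≤ max (dd X i j) (dd X i k) := le_max_left _ _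
  have hm2 : dd X i k ≤ max (dd X i j) (dd X i k) := le_max_right _ _
  rcases eq_or_ne j k with hjk | hjk
  · subst hjk
    have h1 : dmin X ≤ dd X i j := dmin_le_dd X i j
    rw [dd, if_pos rfl]
    linarith
  · rw [dd, if_neg hjk]
    rcases eq_or_ne i j with hij | hij
    · subst hij
      have : dd X i k = dist (X i) (X k) := by rw [dd, if_neg hjk]
      linarith [this ▸ hm2]
    · rcases eq_or_ne i k with hik | hik
      · subst hik
        have : dd X i j = dist (X j) (X i) := by rw [dd, if_neg hij, dist_comm]
        linarith [this ▸ hm1]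
      · have h1 : dd X i j = dist (X i) (X j) := by rw [dd, if_neg hij]
        have h2 : dd X i k = dist (X i) (X k) := by rw [dd, if_neg hik]
        have htri : dist (X j) (X k) ≤ dist (X j) (X i) + dist (X i) (X k) :=
          dist_triangle _ _ _
        rw [dist_comm (X j) (X i)] at htri
        rw [← h1, ← h2] at htri
        linarith

end Aux

lemma core_ineq (a b c : ℝ) (ha : 0 < a) (hb : 0 < b) (hc : 0 < c)
    (h : c ≤ 2 * max a b) :
    1 / (a ^ 2 * b ^ 3) ≤ 4 / c ^ 2 * (1 / a ^ 3 + 1 / b ^ 3) := by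
  have key : c ^ 2 * a ≤ 4 * (a ^ 3 + b ^ 3) := by
    rcases le_total a b with hab | hab
    · rw [max_eq_right hab] at h
      have hc2 : c ^ 2 ≤ 4 * b ^ 2 := by nlinarith
      nlinarith [mul_le_mul_of_nonneg_right hc2 ha.le,
        mul_le_mul_of_nonneg_left hab (show (0:ℝ) ≤ 4 * b ^ 2 by positivity),
        pow_pos ha 3]
    · rw [max_eq_left hab] at h
      have hc2 : c ^ 2 ≤ 4 * a ^ 2 := by nlinarith
      nlinarith [mul_le_mul_of_nonneg_right hc2 ha.le, pow_pos hb 3]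
  rw [div_add_div _ _ (by positivity) (by positivity), div_mul_div_comm,
    div_le_div_iff₀ (by positivity) (by positivity)]
  nlinarith [mul_le_mul_of_nonneg_right key (show (0:ℝ) ≤ a ^ 2 * b ^ 3 by positivity)]

/-- There is a universal constant `C > 0` such that for every `N ≥ 2`, all pairwise distinct
points `X_1, …, X_N ∈ ℝ³` and all indices `j, k`, one has
`∑_i 1/(d_{ij}² d_{ik}³) ≤ C S_3 / d_{jk}²`. -/
theorem stmt3 :
    ∃ C : ℝ, 0 < C ∧ ∀ (N : ℕ), 2 ≤ N →
      ∀ X : Fin N → EuclideanSpace ℝ (Fin 3), Function.Injective X →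
        ∀ j k : Fin N,
          ∑ i : Fin N, 1 / ((dd X i j) ^ 2 * (dd X i k) ^ 3) ≤
            C * Ssum X 3 / (dd X j k) ^ 2 := by
  refine ⟨8, by norm_num, fun N hN X hX j k => ?_⟩
  have hpos : ∀ a b : Fin N, 0 < dd X a b := dd_pos X hN hX
  have hjk := hpos j k
  have hS : ∀ i : Fin N, ∑ l : Fin N, (dd X i l) ^ (-(3:ℝ)) ≤ Ssum X 3 := by
    intro i
    rw [Ssum]
    exact le_ciSup (f := fun i : Fin N => ∑ l : Fin N, (dd X i l) ^ (-(3:ℝ)))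
      (Set.Finite.bddAbove (Set.finite_range _)) i
  have hrw : ∀ a b : Fin N, (dd X a b) ^ (-(3:ℝ)) = 1 / (dd X a b) ^ 3 := by
    intro a b
    rw [Real.rpow_neg (hpos a b).le, show ((3:ℝ)) = ((3:ℕ):ℝ) by norm_num,
      Real.rpow_natCast, one_div]
  have hsum : ∀ m : Fin N, ∑ i : Fin N, 1 / (dd X i m) ^ 3 ≤ Ssum X 3 := by
    intro m
    calc ∑ i : Fin N, 1 / (dd X i m) ^ 3
        = ∑ i : Fin N, (dd X m i) ^ (-(3:ℝ)) := by
          refine Finset.sum_congr rfl fun i _ => ?_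
          rw [hrw, dd_symm]
      _ ≤ Ssum X 3 := hS m
  have step : ∀ i : Fin N, 1 / ((dd X i j) ^ 2 * (dd X i k) ^ 3) ≤
      4 / (dd X j k) ^ 2 * (1 / (dd X i j) ^ 3 + 1 / (dd X i k) ^ 3) := fun i =>
    core_ineq _ _ _ (hpos i j) (hpos i k) hjk (dd_tri X hN hX i j k)
  calc ∑ i : Fin N, 1 / ((dd X i j) ^ 2 * (dd X i k) ^ 3)
      ≤ ∑ i : Fin N, 4 / (dd X j k) ^ 2 * (1 / (dd X i j) ^ 3 + 1 / (dd X i k) ^ 3) :=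
        Finset.sum_le_sum fun i _ => step i
    _ = 4 / (dd X j k) ^ 2 *
        ((∑ i : Fin N, 1 / (dd X i j) ^ 3) + ∑ i : Fin N, 1 / (dd X i k) ^ 3) := by
        rw [← Finset.mul_sum, Finset.sum_add_distrib]
    _ ≤ 4 / (dd X j k) ^ 2 * (Ssum X 3 + Ssum X 3) := by
        have h4 : 0 ≤ 4 / (dd X j k) ^ 2 := by positivity
        exact mul_le_mul_of_nonneg_left (add_le_add (hsum j) (hsum k)) h4
    _ = 8 * Ssum X 3 / (dd X j k) ^ 2 := by
        field_simp
        ring
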